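/- For every q with 0 < q < 1, every integer n ≥ 2, every integer m ≥ 0 and every x ∈ [0,1]: L_{n,q}(t^{m+1},x) = L_{n,q}(t^m,x) + (1−x) · [ (1 − ([n−1]_q/[n]_q)^m) · R_{∞,q}(t^m, v(q,x)) − ([n−1]_q/[n]_q)^m · L_{n−1,q}(t^m, v(q,x)) ], where t^m denotes the monomial function t ↦ t^m on [0,1]. -/

import Mathlib

open Finset Filter

noncomputable section

/-- The q-integer `[n]_q = 1 + q + ⋯ + q^(n-1)`. -/
def qInt (q : ℝ) (n : ℕ) : ℝ := ∑ i ∈ Finset.range n, q ^ i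

/-- The q-factorial `[n]_q!`. -/
def qFact (q : ℝ) : ℕ → ℝ
  | 0 => 1
  | n + 1 => qFact q n * qInt q (n + 1)

/-- The q-binomial coefficient `[n k]_q`. -/
def qBinom (q : ℝ) (n k : ℕ) : ℝ := qFact q n / (qFact q k * qFact q (n - k))

/-- The Lupaş basis function `b_{nk}(q;x)`. -/
def lupasB (q : ℝ) (n k : ℕ) (x : ℝ) : ℝ :=
  qBinom q n k * q ^ (k * (k - 1) / 2) * x ^ k * (1 - x) ^ (n - k) /
    ∏ j ∈ Finset.range (n - 1), (1 - x + q ^ (j + 1) * x)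

/-- The limit Lupaş basis function `b_{∞k}(q;x)` (for `0 < q < 1`, `x ∈ [0,1)`). -/
def lupasBInf (q : ℝ) (k : ℕ) (x : ℝ) : ℝ :=
  q ^ (k * (k - 1) / 2) * (x / (1 - x)) ^ k /
    ((1 - q) ^ k * qFact q k * ∏' j : ℕ, (1 + q ^ j * (x / (1 - x))))

/-- The Lupaş q-analogue of the Bernstein operator `R_{n,q}(f,x)`. -/
def lupasR (q : ℝ) (n : ℕ) (f : ℝ → ℝ) (x : ℝ) : ℝ :=
  ∑ k ∈ Finset.range (n + 1), f (qInt q k / qInt q n) * lupasB q n k x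

/-- The limit q-Lupaş operator `R_{∞,q}(f,x)` for `0 < q < 1`. -/
def lupasRInfLow (q : ℝ) (f : ℝ → ℝ) (x : ℝ) : ℝ :=
  if x = 1 then f 1 else ∑' k : ℕ, f (1 - q ^ k) * lupasBInf q k x

/-- The limit q-Lupaş operator `R_{∞,q}(f,x)`: for `q > 1` it is defined by
reflection, `R_{∞,q}(f,x) = R_{∞,1/q}(g,1-x)` with `g(x) = f(1-x)`. -/
def lupasRInf (q : ℝ) (f : ℝ → ℝ) (x : ℝ) : ℝ :=
  if 1 < q then lupasRInfLow (1 / q) (fun t => f (1 - t)) (1 - x)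
  else lupasRInfLow q f x

/-- The transform `v(q,x) = qx/(1-x+qx)`. -/
def vq (q x : ℝ) : ℝ := q * x / (1 - x + q * x)

/-- `L_{n,q}(f,x) = R_{n,q}(f,x) - R_{∞,q}(f,x)`. -/
def lupasL (q : ℝ) (n : ℕ) (f : ℝ → ℝ) (x : ℝ) : ℝ :=
  lupasR q n f x - lupasRInf q f x

/-- The modulus of continuity `ω(f,t)` of `f` on `[0,1]`. -/
def omega1 (f : ℝ → ℝ) (t : ℝ) : ℝ :=
  sSup {d | ∃ x ∈ Set.Icc (0:ℝ) 1, ∃ y ∈ Set.Icc (0:ℝ) 1, |x - y| ≤ t ∧ d = |f x - f y|}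

/-- The second modulus of smoothness `ω₂(f,t)` of `f` on `[0,1]`. -/
def omega2 (f : ℝ → ℝ) (t : ℝ) : ℝ :=
  sSup {d | ∃ h, 0 ≤ h ∧ h ≤ t ∧ ∃ x, 0 ≤ x ∧ x ≤ 1 - 2 * h ∧
    d = |f (x + 2 * h) - 2 * f (x + h) + f x|}

/-! Both operators obey a recurrence on monomials, and the theorem is their difference.
At the nodes `[k]/[n]` of `R_{n,q}` one has `1 - [k]/[n] = q^k [n-k]/[n]`, and the basis
identity `q^k [n-k] b_{nk}(x) = [n] (1-x) b_{n-1,k}(v(q,x))` turns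
`R_{n,q}(t^m - t^{m+1}, x)` into `(1-x) ([n-1]/[n])^m R_{n-1,q}(t^m, v(q,x))`.
At the nodes `1 - q^k` of `R_{∞,q}` one has `1 - (1 - q^k) = q^k`, and splitting off the first
factor of the infinite product gives `(1-x) b_{∞k}(v(q,x)) = q^k b_{∞k}(x)`, so
`R_{∞,q}(t^m - t^{m+1}, x) = (1-x) R_{∞,q}(t^m, v(q,x))`. -/

section

variable {q x : ℝ}

lemma qInt_zero (q : ℝ) : qInt q 0 = 0 := by simp [qInt]

lemma qInt_add (q : ℝ) (k d : ℕ) : qInt q (k + d) = qInt q k + q ^ k * qInt q d := by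
  simp only [qInt, Finset.sum_range_add, Finset.mul_sum, pow_add]

lemma qInt_pos (hq : 0 < q) {n : ℕ} (hn : 0 < n) : 0 < qInt q n :=
  Finset.sum_pos (fun i _ => pow_pos hq i) (Finset.nonempty_range_iff.mpr hn.ne')

lemma one_le_qInt_succ (hq : 0 ≤ q) (d : ℕ) : 1 ≤ qInt q (d + 1) := by
  rw [add_comm, qInt_add, pow_one]
  simp only [qInt, Finset.sum_range_one, pow_zero]
  have : 0 ≤ ∑ i ∈ Finset.range d, q ^ i := Finset.sum_nonneg fun i _ => pow_nonneg hq i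
  nlinarith

lemma qFact_pos (hq : 0 < q) : ∀ n, 0 < qFact q n
  | 0 => one_pos
  | n + 1 => mul_pos (qFact_pos hq n) (qInt_pos hq n.succ_pos)

lemma qInt_mul_qBinom_succ (hq : 0 < q) {N k : ℕ} (hk : k ≤ N) :
    qInt q (N + 1 - k) * qBinom q (N + 1) k = qInt q (N + 1) * qBinom q N k := by
  obtain ⟨d, rfl⟩ := Nat.exists_eq_add_of_le hk
  have hd : k + d + 1 - k = d + 1 := by omega
  simp only [qBinom, hd, Nat.add_sub_cancel_left, qFact]
  have := (qFact_pos hq k).ne'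
  have := (qFact_pos hq d).ne'
  have := (qInt_pos hq d.succ_pos).ne'
  field_simp

lemma one_sub_add_mul_pos (hx : x ∈ Set.Icc (0 : ℝ) 1) {c : ℝ} (hc : 0 < c) :
    0 < 1 - x + c * x := by
  nlinarith [hx.1, hx.2, mul_nonneg hc.le hx.1]

lemma one_sub_vq_add_mul_vq (hs : 1 - x + q * x ≠ 0) (c : ℝ) :
    1 - vq q x + c * vq q x = (1 - x + c * q * x) / (1 - x + q * x) := by
  unfold vq
  field_simp
  ring

lemma one_sub_vq (hs : 1 - x + q * x ≠ 0) : 1 - vq q x = (1 - x) / (1 - x + q * x) := by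
  simpa using one_sub_vq_add_mul_vq hs 0

lemma prod_vq_mul_pow (hs : 1 - x + q * x ≠ 0) (N : ℕ) :
    (∏ j ∈ Finset.range (N - 1), (1 - vq q x + q ^ (j + 1) * vq q x)) * (1 - x + q * x) ^ N =
      ∏ j ∈ Finset.range N, (1 - x + q ^ (j + 1) * x) := by
  cases N with
  | zero => simp
  | succ M =>
    simp only [one_sub_vq_add_mul_vq hs, Finset.prod_div_distrib, Finset.prod_const,
      Finset.card_range, Nat.add_sub_cancel, Finset.prod_range_succ' _ M, pow_succ]
    rw [div_mul_eq_mul_div, mul_div_assoc, mul_div_right_comm, div_self (pow_ne_zero M hs), pow_zero, one_mul, one_mul]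

lemma qInt_mul_lupasB_succ (hq : 0 < q) (hx : x ∈ Set.Icc (0 : ℝ) 1) {N k : ℕ} (hk : k ≤ N) :
    q ^ k * qInt q (N + 1 - k) * lupasB q (N + 1) k x =
      qInt q (N + 1) * ((1 - x) * lupasB q N k (vq q x)) := by
  have hs := (one_sub_add_mul_pos hx hq).ne'
  have hP : ∏ j ∈ Finset.range (N - 1), (1 - vq q x + q ^ (j + 1) * vq q x) ≠ 0 := by
    refine left_ne_zero_of_mul (b := (1 - x + q * x) ^ N) ?_
    rw [prod_vq_mul_pow hs N]
    exact Finset.prod_ne_zero_iff.2 fun j _ => (one_sub_add_mul_pos hx (pow_pos hq _)).ne'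
  have hB := qInt_mul_qBinom_succ hq hk
  simp only [lupasB, Nat.add_sub_cancel]
  rw [← prod_vq_mul_pow hs N]
  generalize ∏ j ∈ Finset.range (N - 1), (1 - vq q x + q ^ (j + 1) * vq q x) = P at hP ⊢
  obtain ⟨d, rfl⟩ := Nat.exists_eq_add_of_le hk
  have hd : k + d + 1 - k = d + 1 := by omega
  simp only [hd, Nat.add_sub_cancel_left] at hB ⊢
  rw [one_sub_vq hs, vq]
  generalize 1 - x + q * x = s at hs ⊢
  rw [div_pow, div_pow]
  field_simp
  linear_combination (q ^ k * x ^ k * (1 - x) ^ (d + 1) * s ^ (k + d)) * hB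

lemma lupasR_pow_succ (hq : 0 < q) (hx : x ∈ Set.Icc (0 : ℝ) 1) {N : ℕ} (hN : 0 < N) (m : ℕ) :
    lupasR q (N + 1) (fun t => t ^ (m + 1)) x =
      lupasR q (N + 1) (fun t => t ^ m) x -
        (1 - x) * (qInt q N / qInt q (N + 1)) ^ m * lupasR q N (fun t => t ^ m) (vq q x) := by
  have hI : qInt q (N + 1) ≠ 0 := (qInt_pos hq N.succ_pos).ne'
  have hI' : qInt q N ≠ 0 := (qInt_pos hq hN).ne'
  have hsplit : ∀ k ∈ Finset.range (N + 1 + 1),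
      (qInt q k / qInt q (N + 1)) ^ (m + 1) * lupasB q (N + 1) k x =
        (qInt q k / qInt q (N + 1)) ^ m * lupasB q (N + 1) k x -
          (qInt q k / qInt q (N + 1)) ^ m * (q ^ k * qInt q (N + 1 - k) / qInt q (N + 1)) *
            lupasB q (N + 1) k x := by
    intro k hk
    have hsum : qInt q k / qInt q (N + 1) + q ^ k * qInt q (N + 1 - k) / qInt q (N + 1) = 1 := by
      rw [← add_div, ← qInt_add, Nat.add_sub_cancel' (Finset.mem_range_succ_iff.1 hk),
        div_self hI]
    linear_combination ((qInt q k / qInt q (N + 1)) ^ m * lupasB q (N + 1) k x) * hsum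
  have hterm : ∀ k ∈ Finset.range (N + 1),
      (qInt q k / qInt q (N + 1)) ^ m * (q ^ k * qInt q (N + 1 - k) / qInt q (N + 1)) *
          lupasB q (N + 1) k x =
        (1 - x) * (qInt q N / qInt q (N + 1)) ^ m *
          ((qInt q k / qInt q N) ^ m * lupasB q N k (vq q x)) := by
    intro k hk
    have hb : q ^ k * qInt q (N + 1 - k) / qInt q (N + 1) * lupasB q (N + 1) k x =
        (1 - x) * lupasB q N k (vq q x) := by
      rw [div_mul_eq_mul_div, div_eq_iff hI, qInt_mul_lupasB_succ hq hx
        (Finset.mem_range_succ_iff.1 hk), mul_comm]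
    have hpow : (qInt q N / qInt q (N + 1)) ^ m * (qInt q k / qInt q N) ^ m =
        (qInt q k / qInt q (N + 1)) ^ m := by
      rw [← mul_pow, mul_comm, div_mul_div_cancel₀ hI']
    linear_combination (qInt q k / qInt q (N + 1)) ^ m * hb -
      (1 - x) * lupasB q N k (vq q x) * hpow
  have hrest : ∑ k ∈ Finset.range (N + 1 + 1),
      (qInt q k / qInt q (N + 1)) ^ m * (q ^ k * qInt q (N + 1 - k) / qInt q (N + 1)) *
        lupasB q (N + 1) k x =
      (1 - x) * (qInt q N / qInt q (N + 1)) ^ m * lupasR q N (fun t => t ^ m) (vq q x) := by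
    rw [Finset.sum_range_succ, Nat.sub_self, qInt_zero, lupasR, Finset.mul_sum,
      Finset.sum_congr rfl hterm]
    simp
  rw [lupasR, lupasR, Finset.sum_congr rfl hsplit, Finset.sum_sub_distrib, hrest]

lemma summable_geometric_mul (hq0 : 0 ≤ q) (hq1 : q < 1) (t : ℝ) :
    Summable fun j : ℕ => q ^ j * t :=
  (summable_geometric_of_lt_one hq0 hq1).mul_right t

lemma tprod_one_add_geometric_mul_pos (hq0 : 0 ≤ q) (hq1 : q < 1) {t : ℝ} (ht : 0 ≤ t) :
    0 < ∏' j : ℕ, (1 + q ^ j * t) := by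
  rw [← Real.rexp_tsum_eq_tprod (fun j => by positivity)
    (Real.summable_log_one_add_of_summable (summable_geometric_mul hq0 hq1 t))]
  exact Real.exp_pos _

lemma tprod_one_add_geometric_mul (hq0 : 0 ≤ q) (hq1 : q < 1) (t : ℝ) :
    ∏' j : ℕ, (1 + q ^ j * t) = (1 + t) * ∏' j : ℕ, (1 + q ^ j * (q * t)) := by
  have h : Multipliable fun j : ℕ => 1 + q ^ j * (q * t) :=
    Real.multipliable_one_add_of_summable (summable_geometric_mul hq0 hq1 (q * t))
  rw [tprod_eq_zero_mul' (h.congr fun j => by ring), pow_zero, one_mul]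
  exact congrArg _ (tprod_congr fun j => by ring)

lemma lupasBInf_nonneg (hq0 : 0 < q) (hq1 : q < 1) (hx0 : 0 ≤ x) (hx1 : x < 1) (k : ℕ) :
    0 ≤ lupasBInf q k x := by
  have ht : 0 ≤ x / (1 - x) := div_nonneg hx0 (by linarith)
  have := tprod_one_add_geometric_mul_pos hq0.le hq1 ht
  have := qFact_pos hq0 k
  have : 0 < 1 - q := by linarith
  unfold lupasBInf
  positivity

lemma lupasBInf_succ (hq0 : 0 < q) (hq1 : q < 1) (hx0 : 0 ≤ x) (hx1 : x < 1) (k : ℕ) :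
    lupasBInf q (k + 1) x =
      lupasBInf q k x * (q ^ k * (x / (1 - x)) / ((1 - q) * qInt q (k + 1))) := by
  have := (tprod_one_add_geometric_mul_pos hq0.le hq1 (div_nonneg hx0 (sub_nonneg.2 hx1.le))).ne'
  have := (qFact_pos hq0 k).ne'
  have := (qInt_pos hq0 k.succ_pos).ne'
  have : 1 - q ≠ 0 := by linarith
  simp only [lupasBInf, Nat.triangle_succ, qFact, pow_add]
  field_simp

lemma summable_lupasBInf (hq0 : 0 < q) (hq1 : q < 1) (hx0 : 0 ≤ x) (hx1 : x < 1) :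
    Summable fun k : ℕ => lupasBInf q k x := by
  have ht : 0 ≤ x / (1 - x) := div_nonneg hx0 (by linarith)
  set c := x / (1 - x) / (1 - q)
  have hsmall : ∀ᶠ k : ℕ in atTop, q ^ k * c ≤ 1 / 2 := by
    have h := (tendsto_pow_atTop_nhds_zero_of_lt_one hq0.le hq1).mul_const c
    rw [zero_mul] at h
    exact h.eventually_le_const (by norm_num)
  refine summable_of_ratio_norm_eventually_le (r := 1 / 2) (by norm_num) ?_
  filter_upwards [hsmall] with k hk
  have hb := lupasBInf_nonneg hq0 hq1 hx0 hx1 k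
  have hratio : q ^ k * (x / (1 - x)) / ((1 - q) * qInt q (k + 1)) ≤ q ^ k * c := by
    rw [show q ^ k * c = q ^ k * (x / (1 - x)) / (1 - q) from
      (mul_div_assoc _ _ _).symm]
    refine div_le_div_of_nonneg_left (mul_nonneg (pow_nonneg hq0.le k) ht) (sub_pos.2 hq1) ?_
    exact le_mul_of_one_le_right (sub_pos.2 hq1).le (one_le_qInt_succ hq0.le k)
  rw [Real.norm_of_nonneg (lupasBInf_nonneg hq0 hq1 hx0 hx1 _), Real.norm_of_nonneg hb,
    lupasBInf_succ hq0 hq1 hx0 hx1, mul_comm (1 / 2)]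
  exact mul_le_mul_of_nonneg_left (hratio.trans hk) hb

lemma one_sub_mul_lupasBInf_vq (hq0 : 0 < q) (hq1 : q < 1) (hx0 : 0 ≤ x) (hx1 : x < 1) (k : ℕ) :
    (1 - x) * lupasBInf q k (vq q x) = q ^ k * lupasBInf q k x := by
  have h1x : 1 - x ≠ 0 := (sub_pos.2 hx1).ne'
  have hs : 1 - x + q * x ≠ 0 := (one_sub_add_mul_pos ⟨hx0, hx1.le⟩ hq0).ne'
  have hvq : vq q x / (1 - vq q x) = q * (x / (1 - x)) := by
    rw [one_sub_vq hs, vq]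
    field_simp
  have hprod : ∏' j : ℕ, (1 + q ^ j * (q * (x / (1 - x)))) =
      (1 - x) * ∏' j : ℕ, (1 + q ^ j * (x / (1 - x))) := by
    rw [tprod_one_add_geometric_mul hq0.le hq1 (x / (1 - x)), ← mul_assoc,
      show (1 - x) * (1 + x / (1 - x)) = 1 by field_simp; ring, one_mul]
  have := (tprod_one_add_geometric_mul_pos hq0.le hq1 (div_nonneg hx0 (sub_nonneg.2 hx1.le))).ne'
  have := (qFact_pos hq0 k).ne'
  have : 1 - q ≠ 0 := (sub_pos.2 hq1).ne'
  rw [lupasBInf, lupasBInf, hvq, hprod, mul_pow]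
  field_simp

lemma vq_one (hq : q ≠ 0) : vq q 1 = 1 := by
  simp [vq, hq]

lemma vq_lt_one (hq : 0 < q) (hx0 : 0 ≤ x) (hx1 : x < 1) : vq q x < 1 := by
  rw [vq, div_lt_one (one_sub_add_mul_pos ⟨hx0, hx1.le⟩ hq)]
  linarith

lemma lupasRInf_of_le_one (hq : q ≤ 1) : lupasRInf q = lupasRInfLow q := by
  ext f x
  simp [lupasRInf, hq.not_gt]

lemma lupasRInfLow_pow_succ (hq0 : 0 < q) (hq1 : q < 1) (hx : x ∈ Set.Icc (0 : ℝ) 1) (m : ℕ) :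
    lupasRInfLow q (fun t => t ^ (m + 1)) x =
      lupasRInfLow q (fun t => t ^ m) x - (1 - x) * lupasRInfLow q (fun t => t ^ m) (vq q x) := by
  rcases hx.2.eq_or_lt with rfl | hx1
  · simp [lupasRInfLow, vq_one hq0.ne']
  have hb := lupasBInf_nonneg hq0 hq1 hx.1 hx1
  have hsum := summable_lupasBInf hq0 hq1 hx.1 hx1
  have hnode : ∀ k : ℕ, 0 ≤ 1 - q ^ k ∧ 1 - q ^ k ≤ 1 := fun k =>
    ⟨sub_nonneg.2 (pow_le_one₀ hq0.le hq1.le), sub_le_self _ (pow_nonneg hq0.le k)⟩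
  have hS : ∀ c : ℕ → ℝ, (∀ k, 0 ≤ c k ∧ c k ≤ 1) →
      Summable fun k => c k * lupasBInf q k x := fun c hc =>
    hsum.of_nonneg_of_le (fun k => mul_nonneg (hc k).1 (hb k))
      (fun k => mul_le_of_le_one_left (hb k) (hc k).2)
  have hS1 := hS (fun k => (1 - q ^ k) ^ m) fun k =>
    ⟨pow_nonneg (hnode k).1 m, pow_le_one₀ (hnode k).1 (hnode k).2⟩
  have hS2 := hS (fun k => (1 - q ^ k) ^ m * q ^ k) fun k =>
    ⟨mul_nonneg (pow_nonneg (hnode k).1 m) (pow_nonneg hq0.le k),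
      mul_le_one₀ (pow_le_one₀ (hnode k).1 (hnode k).2) (pow_nonneg hq0.le k)
        (pow_le_one₀ hq0.le hq1.le)⟩
  have hshift : (1 - x) * ∑' k : ℕ, (1 - q ^ k) ^ m * lupasBInf q k (vq q x) =
      ∑' k : ℕ, (1 - q ^ k) ^ m * q ^ k * lupasBInf q k x := by
    rw [← tsum_mul_left]
    exact tsum_congr fun k => by
      rw [mul_left_comm, one_sub_mul_lupasBInf_vq hq0 hq1 hx.1 hx1, mul_assoc]
  simp only [lupasRInfLow, hx1.ne, (vq_lt_one hq0 hx.1 hx1).ne, if_false]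
  rw [hshift, ← hS1.tsum_sub hS2]
  exact tsum_congr fun k => by ring

end

theorem lupasL_recurrence (q : ℝ) (hq0 : 0 < q) (hq1 : q < 1) (n : ℕ) (hn : 2 ≤ n) (m : ℕ)
    (x : ℝ) (hx : x ∈ Set.Icc (0:ℝ) 1) :
    lupasL q n (fun t => t ^ (m + 1)) x =
      lupasL q n (fun t => t ^ m) x +
        (1 - x) * ((1 - (qInt q (n - 1) / qInt q n) ^ m) *
            lupasRInf q (fun t => t ^ m) (vq q x) -
          (qInt q (n - 1) / qInt q n) ^ m * lupasL q (n - 1) (fun t => t ^ m) (vq q x)) := by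
  obtain ⟨N, rfl⟩ : ∃ N, n = N + 1 := ⟨n - 1, by omega⟩
  rw [Nat.add_sub_cancel]
  simp only [lupasL, lupasRInf_of_le_one hq1.le]
  rw [lupasR_pow_succ hq0 hx (by omega), lupasRInfLow_pow_succ hq0 hq1 hx]
  ring
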